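/- In the λG-calculus, substitution preserves normal forms of degree d: if t and s are in →d-normal form (no redex of degree d), s is not an m-abstraction of degree d, and x has the type of s, then t[x := s] is in →d-normal form. -/
import Mathlib


namespace LambdaG

/-- Simple types: base types and arrow types. -/
inductive Ty : Type
  | base : ℕ → Ty
  | arr : Ty → Ty → Ty
deriving DecidableEq

/-- The height of a type. -/
def Ty.height : Ty → ℕ
  | .base _ => 0
  | .arr A B => 1 + max A.height B.height

/-- Terms of the λG-calculus: simply typed λ-terms extended with wrappers `⟨t | s⟩`. -/
inductive GTm : Type
  | var : ℕ → Ty → GTm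
  | lam : ℕ → Ty → GTm → GTm
  | app : GTm → GTm → GTm
  | wrap : GTm → GTm → GTm
deriving DecidableEq

/-- Capture-avoiding substitution `t[x^B := s]` (bound variables assumed suitably renamed). -/
def GTm.subst : GTm → ℕ → Ty → GTm → GTm
  | .var y C, x, B, s => if y = x ∧ C = B then s else .var y C
  | .lam y C t, x, B, s =>
      if y = x ∧ C = B then .lam y C t else .lam y C (t.subst x B s)
  | .app t u, x, B, s => .app (t.subst x B s) (u.subst x B s)
  | .wrap t u, x, B, s => .wrap (t.subst x B s) (u.subst x B s)

/-- `t L`: append the memorized terms of the memory `L` to `t` as wrappers. -/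
def GTm.appMem (t : GTm) (L : List GTm) : GTm := L.foldl GTm.wrap t

/-- The (unique) type of a λG-term, if typable.  A wrapper has the type of its body. -/
def GTm.typeof : GTm → Option Ty
  | .var _ A => some A
  | .lam _ A t => (t.typeof).map (Ty.arr A)
  | .app t u =>
      match t.typeof, u.typeof with
      | some (.arr A B), some A' => if A = A' then some B else none
      | _, _ => none
  | .wrap t u =>
      match t.typeof, u.typeof with
      | some A, some _ => some A
      | _, _ => none

/-- Whether a term is an m-abstraction, i.e. of the form `(λx.t)L`. -/
def GTm.headIsLam : GTm → Bool
  | .lam _ _ _ => true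
  | .wrap t _ => t.headIsLam
  | _ => false

/-- The degree of an m-abstraction: the height of its type (`none` for non-m-abstractions). -/
def GTm.mAbsDegree (t : GTm) : Option ℕ :=
  if t.headIsLam then t.typeof.map Ty.height else none

/-- Reduction in the λG-calculus: contextual closure of
`(λx.t)L s →g ⟨t[x := s] | s⟩L`. -/
inductive GStep : GTm → GTm → Prop
  | beta (x : ℕ) (A : Ty) (t : GTm) (L : List GTm) (s : GTm) :
      GStep (GTm.app (GTm.appMem (GTm.lam x A t) L) s)
            (GTm.appMem (GTm.wrap (t.subst x A s) s) L)
  | lam (x : ℕ) (A : Ty) {t t' : GTm} : GStep t t' →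
      GStep (GTm.lam x A t) (GTm.lam x A t')
  | appL {t t' : GTm} (s : GTm) : GStep t t' → GStep (GTm.app t s) (GTm.app t' s)
  | appR (t : GTm) {s s' : GTm} : GStep s s' → GStep (GTm.app t s) (GTm.app t s')
  | wrapL {t t' : GTm} (s : GTm) : GStep t t' → GStep (GTm.wrap t s) (GTm.wrap t' s)
  | wrapR (t : GTm) {s s' : GTm} : GStep s s' → GStep (GTm.wrap t s) (GTm.wrap t s')

/-- Reduction of degree `d`: contraction of redexes whose m-abstraction has degree `d`. -/
inductive GStepD (d : ℕ) : GTm → GTm → Prop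
  | beta (x : ℕ) (A : Ty) (t : GTm) (L : List GTm) (s : GTm)
      (hdeg : (GTm.appMem (GTm.lam x A t) L).mAbsDegree = some d) :
      GStepD d (GTm.app (GTm.appMem (GTm.lam x A t) L) s)
               (GTm.appMem (GTm.wrap (t.subst x A s) s) L)
  | lam (x : ℕ) (A : Ty) {t t' : GTm} : GStepD d t t' →
      GStepD d (GTm.lam x A t) (GTm.lam x A t')
  | appL {t t' : GTm} (s : GTm) : GStepD d t t' → GStepD d (GTm.app t s) (GTm.app t' s)
  | appR (t : GTm) {s s' : GTm} : GStepD d s s' → GStepD d (GTm.app t s) (GTm.app t s')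
  | wrapL {t t' : GTm} (s : GTm) : GStepD d t t' → GStepD d (GTm.wrap t s) (GTm.wrap t' s)
  | wrapR (t : GTm) {s s' : GTm} : GStepD d s s' → GStepD d (GTm.wrap t s) (GTm.wrap t s')

/-- Forgetful reduction: contextual closure of `⟨t | s⟩ ▷ t`. -/
inductive GForget : GTm → GTm → Prop
  | drop (t s : GTm) : GForget (GTm.wrap t s) t
  | lam (x : ℕ) (A : Ty) {t t' : GTm} : GForget t t' →
      GForget (GTm.lam x A t) (GTm.lam x A t')
  | appL {t t' : GTm} (s : GTm) : GForget t t' → GForget (GTm.app t s) (GTm.app t' s)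
  | appR (t : GTm) {s s' : GTm} : GForget s s' → GForget (GTm.app t s) (GTm.app t s')
  | wrapL {t t' : GTm} (s : GTm) : GForget t t' → GForget (GTm.wrap t s) (GTm.wrap t' s)
  | wrapR (t : GTm) {s s' : GTm} : GForget s s' → GForget (GTm.wrap t s) (GTm.wrap t s')

/-- Typing judgments `Γ ⊢ t : A` of the λG-calculus. -/
inductive GHasType : (ℕ → Option Ty) → GTm → Ty → Prop
  | var {Γ : ℕ → Option Ty} {x : ℕ} {A : Ty} :
      Γ x = some A → GHasType Γ (GTm.var x A) A
  | lam {Γ : ℕ → Option Ty} {x : ℕ} {A : Ty} {t : GTm} {B : Ty} :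
      GHasType (Function.update Γ x (some A)) t B →
      GHasType Γ (GTm.lam x A t) (Ty.arr A B)
  | app {Γ : ℕ → Option Ty} {t s : GTm} {A B : Ty} :
      GHasType Γ t (Ty.arr A B) → GHasType Γ s A → GHasType Γ (GTm.app t s) B
  | wrap {Γ : ℕ → Option Ty} {t s : GTm} {A B : Ty} :
      GHasType Γ t A → GHasType Γ s B → GHasType Γ (GTm.wrap t s) A

/-- Decompose an m-abstraction `(λx.t)L` into its abstraction and memory. -/
def GTm.decomp : GTm → Option ((ℕ × Ty × GTm) × List GTm)
  | .lam x A t => some ((x, A, t), [])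
  | .wrap t s => (t.decomp).map (fun p => (p.1, p.2 ++ [s]))
  | _ => none

/-- Simplification of degree `d`: the complete development of all redexes of degree `d`. -/
def GTm.simpD (d : ℕ) : GTm → GTm
  | .var y A => .var y A
  | .lam y A t => .lam y A (t.simpD d)
  | .wrap t s => .wrap (t.simpD d) (s.simpD d)
  | .app t s =>
      if t.mAbsDegree = some d then
        match (t.simpD d).decomp with
        | some ((x, A, b), L) =>
            GTm.appMem (GTm.wrap (b.subst x A (s.simpD d)) (s.simpD d)) L
        | none => .app (t.simpD d) (s.simpD d)
      else .app (t.simpD d) (s.simpD d)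

/-- The max-degree of a term: the maximum degree of its redexes, or `0` if none. -/
def GTm.maxdeg : GTm → ℕ
  | .var _ _ => 0
  | .lam _ _ t => t.maxdeg
  | .wrap t s => max t.maxdeg s.maxdeg
  | .app t s => max (max t.maxdeg s.maxdeg) ((t.mAbsDegree).getD 0)

/-- Iterated simplification `simp_1(⋯ simp_D(t))`. -/
def GTm.simpDown : ℕ → GTm → GTm
  | 0, t => t
  | d + 1, t => GTm.simpDown d (t.simpD (d + 1))

/-- Full simplification: `simpfull(t) = simp_1(simp_2(⋯ simp_D(t)))` where `D = maxdeg t`. -/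
def GTm.simpfull (t : GTm) : GTm := GTm.simpDown t.maxdeg t

/-- The weight of a term: its number of wrappers. -/
def GTm.weight : GTm → ℕ
  | .var _ _ => 0
  | .lam _ _ t => t.weight
  | .app t s => t.weight + s.weight
  | .wrap t s => t.weight + s.weight + 1

theorem appMem_snoc (t : GTm) (L : List GTm) (s : GTm) :
    GTm.appMem t (L ++ [s]) = GTm.wrap (GTm.appMem t L) s := by
  simp [GTm.appMem]

theorem headIsLam_exists {a : GTm} (h : a.headIsLam = true) :
    ∃ x A t L, a = GTm.appMem (GTm.lam x A t) L := by
  induction a with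
  | var y C => simp [GTm.headIsLam] at h
  | lam x A t _ => exact ⟨x, A, t, [], rfl⟩
  | app t u _ _ => simp [GTm.headIsLam] at h
  | wrap t u ih _ =>
    simp only [GTm.headIsLam] at h
    obtain ⟨x, A, b, L, rfl⟩ := ih h
    exact ⟨x, A, b, L ++ [u], (appMem_snoc _ _ _).symm⟩

theorem typeof_subst (a : GTm) (x : ℕ) (B : Ty) (s : GTm) (hs : s.typeof = some B) :
    (a.subst x B s).typeof = a.typeof := by
  induction a with
  | var y C =>
    simp only [GTm.subst]
    split
    · rename_i h; rw [hs, GTm.typeof, h.2]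
    · rfl
  | lam y C t ih =>
    simp only [GTm.subst]
    split
    · rfl
    · simp [GTm.typeof, ih]
  | app t u iht ihu => simp only [GTm.subst, GTm.typeof, iht, ihu]
  | wrap t u iht ihu => simp only [GTm.subst, GTm.typeof, iht, ihu]

theorem typeof_wrap_some {t u : GTm} {C : Ty} (h : (GTm.wrap t u).typeof = some C) :
    t.typeof = some C := by
  rcases ht : t.typeof with _ | A <;> rcases hu : u.typeof with _ | D <;>
    rw [GTm.typeof, ht, hu] at h <;> simp_all

theorem headIsLam_subst {a : GTm} {x : ℕ} {B : Ty} {s : GTm}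
    (h : (a.subst x B s).headIsLam = true) :
    a.headIsLam = true ∨ (s.headIsLam = true ∧ ∀ C, a.typeof = some C → C = B) := by
  induction a with
  | var y C =>
    simp only [GTm.subst] at h
    split at h
    · rename_i hc
      refine Or.inr ⟨h, fun C' hC' => ?_⟩
      rw [GTm.typeof] at hC'
      rw [← Option.some.inj hC', hc.2]
    · simp [GTm.headIsLam] at h
  | lam y C t _ => exact Or.inl rfl
  | app t u _ _ => simp [GTm.subst, GTm.headIsLam] at h
  | wrap t u iht _ =>
    simp only [GTm.subst, GTm.headIsLam] at h
    rcases iht h with h1 | ⟨h1, h2⟩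
    · exact Or.inl h1
    · exact Or.inr ⟨h1, fun C hC => h2 C (typeof_wrap_some hC)⟩

theorem mAbsDegree_subst {a : GTm} {x : ℕ} {B : Ty} {s : GTm} {d : ℕ}
    (hs : s.typeof = some B) (hnabs : s.mAbsDegree ≠ some d)
    (h : (a.subst x B s).mAbsDegree = some d) : a.mAbsDegree = some d := by
  unfold GTm.mAbsDegree at h
  split at h
  · rename_i hl
    rcases headIsLam_subst hl with h1 | ⟨h1, h2⟩
    · unfold GTm.mAbsDegree
      rw [if_pos h1, ← typeof_subst a x B s hs]
      exact h
    · exfalso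
      rw [typeof_subst a x B s hs] at h
      rcases ha : a.typeof with _ | C
      · rw [ha] at h; simp at h
      · rw [ha] at h
        simp only [Option.map_some] at h
        have hCB : C = B := h2 C ha
        apply hnabs
        unfold GTm.mAbsDegree
        rw [if_pos h1, hs]
        simpa [← hCB] using h
  · simp at h

theorem app_step_inv {d : ℕ} {p q u : GTm} (h : GStepD d (GTm.app p q) u) :
    p.mAbsDegree = some d ∨ (∃ p', GStepD d p p') ∨ (∃ q', GStepD d q q') := by
  cases h with
  | beta x A t L s hdeg => exact Or.inl hdeg
  | appL _ h => exact Or.inr (Or.inl ⟨_, h⟩)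
  | appR _ h => exact Or.inr (Or.inr ⟨_, h⟩)

/-- Substitution preserves `→d`-normal forms. -/
theorem subst_preserves_nfD (t s : GTm) (x : ℕ) (B : Ty) (d : ℕ)
    (hs : s.typeof = some B)
    (hnt : ∀ u, ¬ GStepD d t u) (hns : ∀ u, ¬ GStepD d s u)
    (hnabs : s.mAbsDegree ≠ some d) :
    ∀ u, ¬ GStepD d (t.subst x B s) u := by
  induction t with
  | var y C =>
    intro u hu
    simp only [GTm.subst] at hu
    split at hu
    · exact hns u hu
    · cases hu
  | lam y C b ih =>
    intro u hu
    simp only [GTm.subst] at hu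
    have hb : ∀ u, ¬ GStepD d b u := fun u hu => hnt _ (GStepD.lam y C hu)
    split at hu
    · cases hu with
      | lam _ _ h => exact hb _ h
    · cases hu with
      | lam _ _ h => exact ih hb _ h
  | app a b iha ihb =>
    intro u hu
    have ha : ∀ u, ¬ GStepD d a u := fun u hu => hnt _ (GStepD.appL b hu)
    have hb : ∀ u, ¬ GStepD d b u := fun u hu => hnt _ (GStepD.appR a hu)
    simp only [GTm.subst] at hu
    rcases app_step_inv hu with hdeg | ⟨p', hp⟩ | ⟨q', hq⟩
    · have had : a.mAbsDegree = some d := mAbsDegree_subst hs hnabs hdeg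
      have hl : a.headIsLam = true := by
        by_contra hl
        unfold GTm.mAbsDegree at had
        rw [if_neg hl] at had
        simp at had
      obtain ⟨x0, A0, t0, L0, ha_eq⟩ := headIsLam_exists hl
      have hstep : GStepD d (GTm.app a b)
          (GTm.appMem (GTm.wrap (t0.subst x0 A0 b) b) L0) := by
        rw [ha_eq]
        exact GStepD.beta x0 A0 t0 L0 b (by rw [← ha_eq]; exact had)
      exact hnt _ hstep
    · exact iha ha _ hp
    · exact ihb hb _ hq
  | wrap a b iha ihb =>
    intro u hu
    have ha : ∀ u, ¬ GStepD d a u := fun u hu => hnt _ (GStepD.wrapL b hu)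
    have hb : ∀ u, ¬ GStepD d b u := fun u hu => hnt _ (GStepD.wrapR a hu)
    simp only [GTm.subst] at hu
    cases hu with
    | wrapL _ h => exact iha ha _ h
    | wrapR _ h => exact ihb hb _ h

end LambdaG
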